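/- arXiv:1311.6439 — 5 statements merged into one kernel-verified Lean document; each statement's English description precedes it below -/
import Mathlib

section
/- Sum AMSE transfer from uplink to downlink: in the multiuser MIMO setup, given uplink power allocations Q_1,…,Q_K, let β = (Σ_{k=1}^K tr(Q_k)) / (Σ_{k=1}^K Re tr(Q_k⁻¹ α_k²)) and define the downlink power allocations P_k = β·α_k²·Q_k⁻¹ for every k. Then the downlink sum AMSE equals the uplink sum AMSE, ξ̄^{DL} = ξ̄^{UL}, and the same sum power is allocated in both channels: Σ_{k=1}^K tr(P_k) = Σ_{k=1}^K tr(Q_k). -/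
/-!
With `P_k = β α_k² Q_k⁻¹` the downlink receive weight `P_k⁻¹ α_k²` is `β⁻¹ Q_k` and the uplink
receive weight `Q_k⁻¹ α_k²` is `β⁻¹ P_k`: powers and receive weights trade places. By cyclicity of
the trace, the interference and estimation-error power that user `i` causes at user `k` in the
downlink then equals the one user `k` causes at the base-station filter of user `i` in the
uplink, so the two sum AMSEs can differ only in their noise terms. Since the filters have
unit-norm columns these are `σ² β⁻¹ Σ tr Q_k` and `σ² β⁻¹ Σ tr P_k`, and `β` is chosen exactly so
that `Σ tr P_k = Σ tr Q_k`.
-/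

open Matrix BigOperators ComplexOrder

noncomputable section

/-- A diagonal complex matrix built from a real vector. -/
def diagC {n : ℕ} (v : Fin n → ℝ) : Matrix (Fin n) (Fin n) ℂ :=
  Matrix.diagonal (fun i => (v i : ℂ))

/-- The multiuser MIMO setup: `K` users, `N` BS antennas, per-user antenna counts `M k`,
symbol counts `S k`, estimated channels `H k`, transmit/receive filters `G k`, `U k` with
unit-norm columns, invertible real diagonal scaling factors `α k`, Hermitian positive
semidefinite antenna correlation matrices `Rb k`, `Rm k`, channel estimation error variances
`σe2 k ≥ 0` and noise variance `σ2 > 0`. -/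
structure MIMOSetup (K N : ℕ) where
  M : Fin K → ℕ
  S : Fin K → ℕ
  hM : ∀ k, 0 < M k
  hS : ∀ k, 0 < S k
  H : ∀ k : Fin K, Matrix (Fin N) (Fin (M k)) ℂ
  G : ∀ k : Fin K, Matrix (Fin N) (Fin (S k)) ℂ
  U : ∀ k : Fin K, Matrix (Fin (M k)) (Fin (S k)) ℂ
  α : ∀ k : Fin K, Fin (S k) → ℝ
  Rb : Fin K → Matrix (Fin N) (Fin N) ℂ
  Rm : ∀ k : Fin K, Matrix (Fin (M k)) (Fin (M k)) ℂ
  σe2 : Fin K → ℝ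
  σ2 : ℝ
  hG : ∀ k i, ((G k)ᴴ * G k) i i = 1
  hU : ∀ k i, ((U k)ᴴ * U k) i i = 1
  hα : ∀ k i, α k i ≠ 0
  hRb : ∀ k, (Rb k).PosSemidef
  hRm : ∀ k, (Rm k).PosSemidef
  hσe2 : ∀ k, 0 ≤ σe2 k
  hσ2 : 0 < σ2

namespace MIMOSetup

variable {K N : ℕ} (s : MIMOSetup K N)

/-- `α_k` as a diagonal complex matrix. -/
def αM (k : Fin K) : Matrix (Fin (s.S k)) (Fin (s.S k)) ℂ := diagC (s.α k)

/-- `Γ_k^{DL}` for downlink power allocations `P`. -/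
def GammaDL (P : ∀ k : Fin K, Matrix (Fin (s.S k)) (Fin (s.S k)) ℂ) (k : Fin K) :
    Matrix (Fin (s.M k)) (Fin (s.M k)) ℂ :=
  (s.H k)ᴴ * (∑ i, s.G i * P i * (s.G i)ᴴ) * s.H k
    + ((s.σe2 k : ℂ) * (s.Rb k * ∑ i, s.G i * P i * (s.G i)ᴴ).trace) • s.Rm k
    + (s.σ2 : ℂ) • 1

/-- `Γ_c` for uplink power allocations `Q`. -/
def GammaC (Q : ∀ k : Fin K, Matrix (Fin (s.S k)) (Fin (s.S k)) ℂ) :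
    Matrix (Fin N) (Fin N) ℂ :=
  (∑ i, (s.H i * s.U i * Q i * (s.U i)ᴴ * (s.H i)ᴴ
    + ((s.σe2 i : ℂ) * (s.Rm i * (s.U i * Q i * (s.U i)ᴴ)).trace) • s.Rb i))
    + (s.σ2 : ℂ) • 1

/-- The `k`-th user downlink AMSE `ξ̄_k^{DL}`. -/
def xiDLk (P : ∀ k : Fin K, Matrix (Fin (s.S k)) (Fin (s.S k)) ℂ) (k : Fin K) : ℝ :=
  (s.S k : ℝ) + (((P k)⁻¹ * (s.αM k) ^ 2 * (s.U k)ᴴ * s.GammaDL P k * s.U k).trace).re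
    - 2 * ((((s.G k)ᴴ * s.H k * s.U k * s.αM k).trace).re)

/-- The `k`-th user uplink AMSE `ξ̄_k^{UL}`. -/
def xiULk (Q : ∀ k : Fin K, Matrix (Fin (s.S k)) (Fin (s.S k)) ℂ) (k : Fin K) : ℝ :=
  (s.S k : ℝ) + (((Q k)⁻¹ * (s.αM k) ^ 2 * (s.G k)ᴴ * s.GammaC Q * s.G k).trace).re
    - 2 * (((s.αM k * (s.G k)ᴴ * s.H k * s.U k).trace).re)

/-- Downlink sum AMSE `ξ̄^{DL}`. -/
def xiDL (P : ∀ k : Fin K, Matrix (Fin (s.S k)) (Fin (s.S k)) ℂ) : ℝ := ∑ k, s.xiDLk P k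

/-- Uplink sum AMSE `ξ̄^{UL}`. -/
def xiUL (Q : ∀ k : Fin K, Matrix (Fin (s.S k)) (Fin (s.S k)) ℂ) : ℝ := ∑ k, s.xiULk Q k

end MIMOSetup

section Diagonal

variable {n : ℕ}

lemma diagC_mul_diagC (v w : Fin n → ℝ) : diagC v * diagC w = diagC (v * w) := by
  simp [diagC, diagonal_mul_diagonal]

lemma smul_diagC (c : ℝ) (v : Fin n → ℝ) : (c : ℂ) • diagC v = diagC (c • v) := by
  simp [diagC, ← diagonal_smul]

lemma inv_diagC {v : Fin n → ℝ} (hv : ∀ i, v i ≠ 0) : (diagC v)⁻¹ = diagC v⁻¹ := by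
  refine inv_eq_right_inv ?_
  rw [diagC_mul_diagC, diagC, ← diagonal_one]
  congr 1
  ext i
  simp [hv i]

lemma trace_diagC (v : Fin n → ℝ) : (diagC v).trace = ((∑ i, v i : ℝ) : ℂ) := by
  simp [diagC]

lemma trace_diagC_mul_of_diag_eq_one {v : Fin n → ℝ} {A : Matrix (Fin n) (Fin n) ℂ}
    (hA : ∀ i, A i i = 1) : (diagC v * A).trace = (diagC v).trace := by
  simp [diagC, trace, hA]

end Diagonal

lemma sum_sum_pos {K : ℕ} {S : Fin K → ℕ} (hK : 0 < K) (hS : ∀ k, 0 < S k)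
    {f : ∀ k, Fin (S k) → ℝ} (hf : ∀ k i, 0 < f k i) : 0 < ∑ k, ∑ i, f k i := by
  have : Nonempty (Fin K) := Fin.pos_iff_nonempty.mp hK
  refine Finset.sum_pos (fun k _ => ?_) Finset.univ_nonempty
  have : Nonempty (Fin (S k)) := Fin.pos_iff_nonempty.mp (hS k)
  exact Finset.sum_pos (fun i _ => hf k i) Finset.univ_nonempty

namespace MIMOSetup

variable {K N : ℕ} (s : MIMOSetup K N)

lemma αM_sq (k : Fin K) : s.αM k ^ 2 = diagC (s.α k ^ 2) := by
  rw [sq, αM, diagC_mul_diagC, sq]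

lemma inv_diagC_mul_αM_sq (k : Fin K) {q : Fin (s.S k) → ℝ} (hq : ∀ i, q i ≠ 0) :
    (diagC q)⁻¹ * s.αM k ^ 2 = diagC (q⁻¹ * s.α k ^ 2) := by
  rw [inv_diagC hq, αM_sq, diagC_mul_diagC]

lemma αM_sq_mul_inv_diagC (k : Fin K) {q : Fin (s.S k) → ℝ} (hq : ∀ i, q i ≠ 0) :
    s.αM k ^ 2 * (diagC q)⁻¹ = diagC (q⁻¹ * s.α k ^ 2) := by
  rw [inv_diagC hq, αM_sq, diagC_mul_diagC, mul_comm]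

lemma inv_smul_diagC_mul_αM_sq (k : Fin K) {q : Fin (s.S k) → ℝ} (hq : ∀ i, q i ≠ 0) {c : ℝ}
    (hc : c ≠ 0) : ((c : ℂ) • diagC (q⁻¹ * s.α k ^ 2))⁻¹ * s.αM k ^ 2 = (c : ℂ)⁻¹ • diagC q := by
  have hα := s.hα k
  rw [smul_diagC, inv_diagC (by simp [hc, hq, hα]), αM_sq, diagC_mul_diagC, ← Complex.ofReal_inv,
    smul_diagC]
  congr 1
  ext i
  have := hα i
  simp only [Pi.mul_apply, Pi.inv_apply, Pi.smul_apply, Pi.pow_apply, smul_eq_mul]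
  field_simp

/-- The interference and estimation-error power that user `i`, precoded with `B`, causes at
user `k`, whose received signal is weighted by `A`. -/
def coupling (k i : Fin K) (A : Matrix (Fin (s.S k)) (Fin (s.S k)) ℂ)
    (B : Matrix (Fin (s.S i)) (Fin (s.S i)) ℂ) : ℂ :=
  (A * (s.U k)ᴴ * (s.H k)ᴴ * (s.G i * B * (s.G i)ᴴ) * s.H k * s.U k).trace
    + s.σe2 k * (s.Rb k * (s.G i * B * (s.G i)ᴴ)).trace * (A * (s.U k)ᴴ * s.Rm k * s.U k).trace

lemma coupling_smul_smul (k i : Fin K) (a b : ℂ) (A : Matrix (Fin (s.S k)) (Fin (s.S k)) ℂ)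
    (B : Matrix (Fin (s.S i)) (Fin (s.S i)) ℂ) :
    s.coupling k i (a • A) (b • B) = a * b * s.coupling k i A B := by
  simp only [coupling, Matrix.smul_mul, Matrix.mul_smul, trace_smul, smul_eq_mul]
  ring

lemma coupling_eq_uplink (i k : Fin K) (A : Matrix (Fin (s.S i)) (Fin (s.S i)) ℂ)
    (B : Matrix (Fin (s.S k)) (Fin (s.S k)) ℂ) :
    s.coupling i k A B
      = (B * (s.G k)ᴴ * (s.H i * s.U i * A * (s.U i)ᴴ * (s.H i)ᴴ) * s.G k).trace
        + s.σe2 i * (s.Rm i * (s.U i * A * (s.U i)ᴴ)).trace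
          * (B * (s.G k)ᴴ * s.Rb i * s.G k).trace := by
  have h₁ := trace_mul_comm (A * (s.U i)ᴴ * (s.H i)ᴴ * s.G k) (B * (s.G k)ᴴ * s.H i * s.U i)
  have h₂ := trace_mul_comm (s.Rb i * s.G k) (B * (s.G k)ᴴ)
  have h₃ := trace_mul_comm (A * (s.U i)ᴴ) (s.Rm i * s.U i)
  simp only [coupling, Matrix.mul_assoc] at h₁ h₂ h₃ ⊢
  rw [h₁, h₂, h₃]
  ring

lemma trace_mul_GammaDL (P : ∀ k : Fin K, Matrix (Fin (s.S k)) (Fin (s.S k)) ℂ) (k : Fin K)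
    (W : Matrix (Fin (s.S k)) (Fin (s.S k)) ℂ) :
    (W * (s.U k)ᴴ * s.GammaDL P k * s.U k).trace
      = ∑ i, s.coupling k i W (P i) + s.σ2 * (W * (s.U k)ᴴ * s.U k).trace := by
  simp only [GammaDL, coupling, Matrix.mul_add, Matrix.add_mul, Matrix.mul_sum, Matrix.sum_mul,
    Matrix.mul_smul, Matrix.smul_mul, Matrix.mul_one, trace_add, trace_sum, trace_smul,
    smul_eq_mul, Finset.sum_add_distrib, Finset.mul_sum, Finset.sum_mul, Matrix.mul_assoc]

lemma trace_mul_GammaC (Q : ∀ k : Fin K, Matrix (Fin (s.S k)) (Fin (s.S k)) ℂ) (k : Fin K)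
    (W : Matrix (Fin (s.S k)) (Fin (s.S k)) ℂ) :
    (W * (s.G k)ᴴ * s.GammaC Q * s.G k).trace
      = ∑ i, s.coupling i k (Q i) W + s.σ2 * (W * (s.G k)ᴴ * s.G k).trace := by
  simp only [GammaC, coupling_eq_uplink, Matrix.mul_add, Matrix.add_mul, Matrix.mul_sum,
    Matrix.sum_mul, Matrix.mul_smul, Matrix.smul_mul, Matrix.mul_one, trace_add, trace_sum,
    trace_smul, smul_eq_mul, Finset.sum_add_distrib]

/-- Uplink–downlink duality: exchanging the roles of transmit powers and receive weights
preserves the total interference, so only the noise terms can differ. -/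
theorem sum_trace_GammaDL_eq_sum_trace_GammaC
    (A B : ∀ k : Fin K, Matrix (Fin (s.S k)) (Fin (s.S k)) ℂ) {c : ℂ} (hc : c ≠ 0)
    (hnoise : c⁻¹ * ∑ k, (A k * (s.U k)ᴴ * s.U k).trace
      = ∑ k, (B k * (s.G k)ᴴ * s.G k).trace) :
    ∑ k, (c⁻¹ • A k * (s.U k)ᴴ * s.GammaDL (fun i => c • B i) k * s.U k).trace
      = ∑ k, (B k * (s.G k)ᴴ * s.GammaC A * s.G k).trace := by
  simp only [trace_mul_GammaDL, trace_mul_GammaC]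
  simp only [coupling_smul_smul, inv_mul_cancel₀ hc, one_mul, Matrix.smul_mul, trace_smul,
    smul_eq_mul, Finset.sum_add_distrib, ← Finset.mul_sum, ← hnoise]
  rw [Finset.sum_comm]

theorem sum_trace_GammaDL_eq_sum_trace_GammaC_diagC (q d : ∀ k : Fin K, Fin (s.S k) → ℝ) {c : ℝ}
    (hc : c ≠ 0) (hpower : c * ∑ k, ∑ i, d k i = ∑ k, ∑ i, q k i) :
    ∑ k, ((c : ℂ)⁻¹ • diagC (q k) * (s.U k)ᴴ
        * s.GammaDL (fun i => (c : ℂ) • diagC (d i)) k * s.U k).trace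
      = ∑ k, (diagC (d k) * (s.G k)ᴴ * s.GammaC (fun k => diagC (q k)) * s.G k).trace := by
  refine s.sum_trace_GammaDL_eq_sum_trace_GammaC _ _ (by exact_mod_cast hc) ?_
  simp only [Matrix.mul_assoc, trace_diagC_mul_of_diag_eq_one (s.hU _),
    trace_diagC_mul_of_diag_eq_one (s.hG _), trace_diagC]
  rw [inv_mul_eq_iff_eq_mul₀ (by exact_mod_cast hc)]
  exact_mod_cast hpower.symm

theorem xiDL_eq_xiUL_of_sum_trace_eq (P Q : ∀ k : Fin K, Matrix (Fin (s.S k)) (Fin (s.S k)) ℂ)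
    (h : ∑ k, ((P k)⁻¹ * s.αM k ^ 2 * (s.U k)ᴴ * s.GammaDL P k * s.U k).trace
      = ∑ k, ((Q k)⁻¹ * s.αM k ^ 2 * (s.G k)ᴴ * s.GammaC Q * s.G k).trace) :
    s.xiDL P = s.xiUL Q := by
  have hlin : ∀ k, ((s.G k)ᴴ * s.H k * s.U k * s.αM k).trace
      = (s.αM k * (s.G k)ᴴ * s.H k * s.U k).trace := fun k => by
    simpa only [Matrix.mul_assoc] using trace_mul_comm ((s.G k)ᴴ * s.H k * s.U k) (s.αM k)
  simp only [xiDL, xiUL, xiDLk, xiULk, hlin, Finset.sum_add_distrib, Finset.sum_sub_distrib,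
    ← Complex.re_sum, h]

end MIMOSetup

open MIMOSetup in
theorem sum_AMSE_transfer_uplink_to_downlink_general {K N : ℕ} (hK : 0 < K)
    (s : MIMOSetup K N)
    (Q : ∀ k : Fin K, Fin (s.S k) → ℝ) (hQ : ∀ k i, 0 < Q k i)
    (β : ℝ)
    (hβ : β = (∑ k, ((diagC (Q k)).trace).re) /
      (∑ k, (((diagC (Q k))⁻¹ * (s.αM k) ^ 2).trace).re))
    (P : ∀ k : Fin K, Matrix (Fin (s.S k)) (Fin (s.S k)) ℂ)
    (hP : ∀ k, P k = (β : ℂ) • ((s.αM k) ^ 2 * (diagC (Q k))⁻¹)) :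
    s.xiDL P = s.xiUL (fun k => diagC (Q k)) ∧
      ∑ k, (P k).trace = ∑ k, (diagC (Q k)).trace := by
  have hQ0 : ∀ k i, Q k i ≠ 0 := fun k i => (hQ k i).ne'
  have hβ' : β = (∑ k, ∑ i, Q k i) / ∑ k, ∑ i, ((Q k)⁻¹ * s.α k ^ 2) i := by
    simpa only [inv_diagC_mul_αM_sq _ _ (hQ0 _), trace_diagC, Complex.ofReal_re] using hβ
  have hden := sum_sum_pos hK s.hS fun k i => show 0 < ((Q k)⁻¹ * s.α k ^ 2) i from
    mul_pos (inv_pos.mpr (hQ k i)) (sq_pos_of_ne_zero (s.hα k i))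
  have hβ0 : β ≠ 0 := (hβ' ▸ div_pos (sum_sum_pos hK s.hS hQ) hden).ne'
  have hpower : β * ∑ k, ∑ i, ((Q k)⁻¹ * s.α k ^ 2) i = ∑ k, ∑ i, Q k i := by
    rw [hβ', div_mul_cancel₀ _ hden.ne']
  obtain rfl : P = fun k => (β : ℂ) • diagC ((Q k)⁻¹ * s.α k ^ 2) :=
    funext fun k => by rw [hP, αM_sq_mul_inv_diagC _ _ (hQ0 k)]
  refine ⟨xiDL_eq_xiUL_of_sum_trace_eq s _ _ ?_, ?_⟩
  · simp only [inv_smul_diagC_mul_αM_sq _ _ (hQ0 _) hβ0, inv_diagC_mul_αM_sq _ _ (hQ0 _)]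
    exact s.sum_trace_GammaDL_eq_sum_trace_GammaC_diagC _ _ hβ0 hpower
  · simp only [trace_smul, trace_diagC, smul_eq_mul, ← Finset.mul_sum]
    exact_mod_cast hpower

/-- **Sum AMSE transfer from uplink to downlink.** Given uplink power allocations
`Q_1, …, Q_K`, with `β = (Σ_k tr Q_k) / (Σ_k Re tr (Q_k⁻¹ α_k²))` and downlink power
allocations `P_k = β • α_k² Q_k⁻¹`, the downlink sum AMSE equals the uplink sum AMSE and
the same sum power is allocated in both channels. -/
theorem sum_AMSE_transfer_uplink_to_downlink {K N : ℕ} (hK : 0 < K) (hN : 0 < N)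
    (s : MIMOSetup K N)
    (Q : ∀ k : Fin K, Fin (s.S k) → ℝ) (hQ : ∀ k i, 0 < Q k i)
    (β : ℝ)
    (hβ : β = (∑ k, ((diagC (Q k)).trace).re) /
      (∑ k, (((diagC (Q k))⁻¹ * (s.αM k) ^ 2).trace).re))
    (P : ∀ k : Fin K, Matrix (Fin (s.S k)) (Fin (s.S k)) ℂ)
    (hP : ∀ k, P k = (β : ℂ) • ((s.αM k) ^ 2 * (diagC (Q k))⁻¹)) :
    s.xiDL P = s.xiUL (fun k => diagC (Q k)) ∧
      ∑ k, (P k).trace = ∑ k, (diagC (Q k)).trace :=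
  sum_AMSE_transfer_uplink_to_downlink_general hK s Q hQ β hβ P hP
end
end

section
/- User-wise AMSE transfer from uplink to downlink: in the multiuser MIMO setup with the matrix X as defined, suppose β ∈ ℝ^K satisfies the linear system X·β = σ²·(tr(Q_1),…,tr(Q_K))ᵀ and β_k > 0 for every k, and define the downlink power allocations P_k = β_k·α_k²·Q_k⁻¹. Then every user achieves the same AMSE in both channels: ξ̄_k^{DL} = ξ̄_k^{UL} for all k ∈ {1,…,K}. -/
open Matrix BigOperators ComplexOrder

noncomputable section

namespace MIMOSetup

variable {K N : ℕ}

/-- The matrix `X` of the user-wise uplink-to-downlink AMSE transfer (eq. (12)). -/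
def Xmat (s : MIMOSetup K N) (Q : ∀ k : Fin K, Fin (s.S k) → ℝ) :
    Matrix (Fin K) (Fin K) ℝ := fun k l =>
  if k = l then
    s.σ2 * (((diagC (Q k))⁻¹ * (s.αM k) ^ 2).trace).re
      + ∑ i ∈ Finset.univ.erase k,
        ((((diagC (Q k))⁻¹ * (s.αM k) ^ 2 * (s.G k)ᴴ * s.H i * s.U i * diagC (Q i)
            * (s.U i)ᴴ * (s.H i)ᴴ * s.G k).trace).re
          + s.σe2 i * (((s.Rm i * (s.U i * diagC (Q i) * (s.U i)ᴴ)).trace).re)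
            * (((s.Rb i * (s.G k * (s.αM k) ^ 2 * (diagC (Q k))⁻¹ * (s.G k)ᴴ)).trace).re))
  else
    -((((diagC (Q l))⁻¹ * (s.αM l) ^ 2 * (s.G l)ᴴ * s.H k * s.U k * diagC (Q k)
        * (s.U k)ᴴ * (s.H k)ᴴ * s.G l).trace).re
      + s.σe2 k * (((s.Rm k * (s.U k * diagC (Q k) * (s.U k)ᴴ)).trace).re)
        * (((s.Rb k * (s.G l * (s.αM l) ^ 2 * (diagC (Q l))⁻¹ * (s.G l)ᴴ)).trace).re))

end MIMOSetup

/-! Let `c k i` (`interference Q k i`) be the weighted interference that user `i`'s uplink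
signal, including its channel-estimation-error part, causes at the receive filter of user `k`.
By cyclicity of the trace, the uplink AMSE of user `k` involves the row sum
`∑ i, c k i + σ² tr (Q_k⁻¹ α_k²)`, while with `P_i = β_i α_i² Q_i⁻¹` the downlink AMSE involves
the weighted column sum `β_k⁻¹ (∑ i, β_i c i k + σ² tr Q_k)`. Since
`X = diagonal (σ² tr (Q_k⁻¹ α_k²) + ∑ i, c k i) - cᵀ`, row `k` of `X β = σ² tr Q` says exactly
that the two agree. -/

namespace Matrix

variable {n : Type*} [Fintype n]

lemma diagonal_sub_transpose_mulVec_apply [DecidableEq n] {R : Type*} [CommRing R]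
    (v β : n → R) (c : Matrix n n R) (k : n) :
    ((diagonal v - cᵀ) *ᵥ β) k = v k * β k - ∑ l, c l k * β l := by
  simp [mulVec, dotProduct, sub_mul, diagonal_apply]

lemma IsDiag.trace_mul_of_diag_eq_one [DecidableEq n] {R : Type*} [NonAssocSemiring R]
    {D M : Matrix n n R} (hD : D.IsDiag) (hM : ∀ i, M i i = 1) : (D * M).trace = D.trace := by
  rw [← hD.diagonal_diag]
  simp [trace, diagonal_mul, hM]

lemma IsHermitian.im_trace_mul {A B : Matrix n n ℂ} (hA : A.IsHermitian) (hB : B.IsHermitian) :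
    (A * B).trace.im = 0 := by
  refine Complex.conj_eq_iff_im.mp ?_
  change star _ = _
  rw [← trace_conjTranspose, conjTranspose_mul, hA.eq, hB.eq, trace_mul_comm]

variable [DecidableEq n] {𝕜 : Type*} [Field 𝕜]

lemma commute_diagonal_pow_inv_diagonal (u v : n → 𝕜) (m : ℕ) :
    Commute (diagonal u ^ m) (diagonal v)⁻¹ := by
  rw [inv_diagonal, diagonal_pow]
  exact commute_diagonal _ _

lemma isDiag_inv_diagonal_mul_diagonal_pow (u v : n → 𝕜) (m : ℕ) :
    ((diagonal u)⁻¹ * diagonal v ^ m).IsDiag := by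
  rw [inv_diagonal, diagonal_pow, diagonal_mul_diagonal]
  exact isDiag_diagonal _

lemma inv_smul_mul_inv_mul {A B : Matrix n n 𝕜} (hA : IsUnit A.det) (hB : IsUnit B.det)
    {c : 𝕜} (hc : c ≠ 0) : (c • (A * B⁻¹))⁻¹ * A = c⁻¹ • B := by
  have hinv : (c • (A * B⁻¹))⁻¹ = c⁻¹ • (B * A⁻¹) := by
    refine inv_eq_left_inv ?_
    rw [smul_mul_smul_comm, inv_mul_cancel₀ hc, one_smul, Matrix.mul_assoc,
      ← Matrix.mul_assoc A⁻¹, nonsing_inv_mul A hA, Matrix.one_mul, mul_nonsing_inv B hB]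
  rw [hinv, smul_mul, Matrix.mul_assoc, nonsing_inv_mul A hA, Matrix.mul_one]

end Matrix

lemma isHermitian_diagC {n : ℕ} (v : Fin n → ℝ) : (diagC v).IsHermitian :=
  isHermitian_diagonal_of_self_adjoint _ (by ext i; simp)

lemma isUnit_det_diagC {n : ℕ} {v : Fin n → ℝ} (hv : ∀ i, v i ≠ 0) : IsUnit (diagC v).det := by
  rw [diagC, det_diagonal, isUnit_iff_ne_zero, Finset.prod_ne_zero_iff]
  exact fun i _ => Complex.ofReal_ne_zero.mpr (hv i)

namespace MIMOSetup

variable {K N : ℕ} (s : MIMOSetup K N) (Q : ∀ k : Fin K, Fin (s.S k) → ℝ)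

lemma αM_sq_mul_inv_diagC_comm (k : Fin K) (v : Fin (s.S k) → ℝ) :
    s.αM k ^ 2 * (diagC v)⁻¹ = (diagC v)⁻¹ * s.αM k ^ 2 :=
  (commute_diagonal_pow_inv_diagonal _ _ 2).eq

lemma isDiag_inv_diagC_mul_αM_sq (k : Fin K) (v : Fin (s.S k) → ℝ) :
    ((diagC v)⁻¹ * s.αM k ^ 2).IsDiag :=
  isDiag_inv_diagonal_mul_diagonal_pow _ _ 2

def interference (k i : Fin K) : ℂ :=
  ((diagC (Q k))⁻¹ * s.αM k ^ 2 * (s.G k)ᴴ * s.H i * s.U i * diagC (Q i) * (s.U i)ᴴ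
      * (s.H i)ᴴ * s.G k).trace
    + s.σe2 i * (s.Rm i * (s.U i * diagC (Q i) * (s.U i)ᴴ)).trace
      * (s.Rb i * (s.G k * s.αM k ^ 2 * (diagC (Q k))⁻¹ * (s.G k)ᴴ)).trace

lemma im_trace_Rm_mul (i : Fin K) : (s.Rm i * (s.U i * diagC (Q i) * (s.U i)ᴴ)).trace.im = 0 :=
  (s.hRm i).isHermitian.im_trace_mul (isHermitian_mul_mul_conjTranspose _ (isHermitian_diagC _))

lemma re_interference (k i : Fin K) :
    (s.interference Q k i).re =
      ((diagC (Q k))⁻¹ * s.αM k ^ 2 * (s.G k)ᴴ * s.H i * s.U i * diagC (Q i) * (s.U i)ᴴ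
          * (s.H i)ᴴ * s.G k).trace.re
        + s.σe2 i * (s.Rm i * (s.U i * diagC (Q i) * (s.U i)ᴴ)).trace.re
          * (s.Rb i * (s.G k * s.αM k ^ 2 * (diagC (Q k))⁻¹ * (s.G k)ᴴ)).trace.re := by
  simp [interference, Complex.mul_re, s.im_trace_Rm_mul Q i]

lemma Xmat_eq :
    s.Xmat Q = diagonal (fun k => s.σ2 * ((diagC (Q k))⁻¹ * s.αM k ^ 2).trace.re
        + ∑ i, (s.interference Q k i).re) - (of fun k i => (s.interference Q k i).re)ᵀ := by
  ext k l
  by_cases hkl : k = l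
  · subst hkl
    rw [Xmat, if_pos rfl, Matrix.sub_apply, diagonal_apply_eq, transpose_apply, of_apply,
      ← Finset.add_sum_erase _ _ (Finset.mem_univ k)]
    simp only [re_interference]
    ring
  · rw [Xmat, if_neg hkl, Matrix.sub_apply, diagonal_apply_ne _ hkl, transpose_apply, of_apply,
      re_interference]
    ring
lemma trace_uplink (k : Fin K) :
    ((diagC (Q k))⁻¹ * s.αM k ^ 2 * (s.G k)ᴴ * s.GammaC (fun i => diagC (Q i)) * s.G k).trace
      = ∑ i, s.interference Q k i + s.σ2 * ((diagC (Q k))⁻¹ * s.αM k ^ 2).trace := by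
  rw [GammaC]
  simp only [Matrix.mul_add, Matrix.add_mul, Matrix.mul_sum, Matrix.sum_mul, Matrix.mul_smul,
    Matrix.smul_mul, trace_add, trace_sum, trace_smul, smul_eq_mul, Matrix.mul_one]
  congr 1
  · refine Finset.sum_congr rfl fun i _ => ?_
    have hRb : (s.Rb i * (s.G k * s.αM k ^ 2 * (diagC (Q k))⁻¹ * (s.G k)ᴴ)).trace
        = ((diagC (Q k))⁻¹ * s.αM k ^ 2 * (s.G k)ᴴ * s.Rb i * s.G k).trace := by
      rw [Matrix.mul_assoc (s.G k) (s.αM k ^ 2), s.αM_sq_mul_inv_diagC_comm,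
        trace_mul_comm (s.Rb i), trace_mul_comm _ (s.G k)]
      simp only [Matrix.mul_assoc]
    rw [interference, hRb]
    simp only [Matrix.mul_assoc]
  · rw [Matrix.mul_assoc _ (s.G k)ᴴ,
      (s.isDiag_inv_diagC_mul_αM_sq k _).trace_mul_of_diag_eq_one (s.hG k)]

lemma inv_smul_αM_sq_mul_inv_diagC_mul {k : Fin K} {b : ℝ} (hb : b ≠ 0)
    {v : Fin (s.S k) → ℝ} (hv : ∀ j, v j ≠ 0) :
    ((b : ℂ) • (s.αM k ^ 2 * (diagC v)⁻¹))⁻¹ * s.αM k ^ 2 = (b : ℂ)⁻¹ • diagC v := by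
  refine inv_smul_mul_inv_mul ?_ (isUnit_det_diagC hv) (Complex.ofReal_ne_zero.mpr hb)
  rw [det_pow]
  exact (isUnit_det_diagC (s.hα k)).pow 2

lemma trace_downlink (β : Fin K → ℝ) (P : ∀ k : Fin K, Matrix (Fin (s.S k)) (Fin (s.S k)) ℂ)
    (hP : ∀ i, P i = (β i : ℂ) • (s.αM i ^ 2 * (diagC (Q i))⁻¹)) (k : Fin K)
    (hQ : ∀ j, Q k j ≠ 0) (hβ : β k ≠ 0) :
    ((P k)⁻¹ * s.αM k ^ 2 * (s.U k)ᴴ * s.GammaDL P k * s.U k).trace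
      = (β k : ℂ)⁻¹ * (∑ i, s.interference Q i k * β i + s.σ2 * (diagC (Q k)).trace) := by
  have hsum : ∑ i, s.G i * P i * (s.G i)ᴴ
      = ∑ i, (β i : ℂ) • (s.G i * s.αM i ^ 2 * (diagC (Q i))⁻¹ * (s.G i)ᴴ) := by
    simp only [hP, Matrix.mul_smul, Matrix.smul_mul, Matrix.mul_assoc]
  rw [hP k, s.inv_smul_αM_sq_mul_inv_diagC_mul hβ hQ, GammaDL, hsum]
  simp only [Matrix.mul_add, Matrix.add_mul, Matrix.mul_sum, Matrix.sum_mul, Matrix.mul_smul,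
    Matrix.smul_mul, trace_add, trace_sum, trace_smul, smul_eq_mul, Matrix.mul_one]
  have hH : ∀ i, (diagC (Q k) * (s.U k)ᴴ * ((s.H k)ᴴ * (s.G i * s.αM i ^ 2 * (diagC (Q i))⁻¹
      * (s.G i)ᴴ) * s.H k) * s.U k).trace = ((diagC (Q i))⁻¹ * s.αM i ^ 2 * (s.G i)ᴴ * s.H k
        * s.U k * diagC (Q k) * (s.U k)ᴴ * (s.H k)ᴴ * s.G i).trace := fun i =>
    calc _ = (diagC (Q k) * (s.U k)ᴴ * (s.H k)ᴴ * s.G i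
          * ((diagC (Q i))⁻¹ * s.αM i ^ 2 * (s.G i)ᴴ * s.H k * s.U k)).trace := by
          rw [Matrix.mul_assoc (s.G i), s.αM_sq_mul_inv_diagC_comm]; simp only [Matrix.mul_assoc]
      _ = _ := by rw [trace_mul_comm]; simp only [Matrix.mul_assoc]
  have hRm : (diagC (Q k) * (s.U k)ᴴ * s.Rm k * s.U k).trace
      = (s.Rm k * (s.U k * diagC (Q k) * (s.U k)ᴴ)).trace := by
    rw [Matrix.mul_assoc _ (s.Rm k), trace_mul_comm]; simp only [Matrix.mul_assoc]
  have hU : (diagC (Q k) * (s.U k)ᴴ * s.U k).trace = (diagC (Q k)).trace := by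
    rw [Matrix.mul_assoc]; exact (isDiag_diagonal _).trace_mul_of_diag_eq_one (s.hU k)
  simp only [hH, hRm, hU, interference, add_mul, mul_add, Finset.mul_sum, Finset.sum_mul,
    Finset.sum_add_distrib]
  congr 1
  · congr 1 <;> exact Finset.sum_congr rfl fun _ _ => by ring
  · ring

end MIMOSetup

theorem userwise_AMSE_transfer_uplink_to_downlink_general {K N : ℕ}
    (s : MIMOSetup K N)
    (Q : ∀ k : Fin K, Fin (s.S k) → ℝ) (hQ : ∀ k i, 0 < Q k i)
    (β : Fin K → ℝ) (hβpos : ∀ k, 0 < β k)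
    (hβ : s.Xmat Q *ᵥ β = fun k => s.σ2 * ((diagC (Q k)).trace).re)
    (P : ∀ k : Fin K, Matrix (Fin (s.S k)) (Fin (s.S k)) ℂ)
    (hP : ∀ k, P k = (β k : ℂ) • ((s.αM k) ^ 2 * (diagC (Q k))⁻¹)) :
    ∀ k, s.xiDLk P k = s.xiULk (fun k => diagC (Q k)) k := by
  intro k
  have hβk : β k ≠ 0 := (hβpos k).ne'
  have hrow := congrFun hβ k
  rw [s.Xmat_eq, diagonal_sub_transpose_mulVec_apply] at hrow
  have hcross : ((s.G k)ᴴ * s.H k * s.U k * s.αM k).trace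
      = (s.αM k * (s.G k)ᴴ * s.H k * s.U k).trace := by
    rw [trace_mul_comm]; simp only [Matrix.mul_assoc]
  rw [MIMOSetup.xiDLk, MIMOSetup.xiULk, s.trace_downlink Q β P hP k (fun j => (hQ k j).ne') hβk,
    s.trace_uplink Q k, hcross, ← Complex.ofReal_inv]
  simp only [of_apply] at hrow
  simp only [Complex.re_ofReal_mul, Complex.add_re, Complex.re_sum, Complex.re_mul_ofReal]
  field_simp
  linear_combination -hrow

/-- **User-wise AMSE transfer from uplink to downlink.** If `β ∈ ℝ^K` solves
`X·β = σ²·(tr Q_1, …, tr Q_K)ᵀ` with `β_k > 0` for every `k`, and the downlink power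
allocations are `P_k = β_k • α_k² Q_k⁻¹`, then every user achieves the same AMSE in both
channels. -/
theorem userwise_AMSE_transfer_uplink_to_downlink {K N : ℕ} (hK : 0 < K) (hN : 0 < N)
    (s : MIMOSetup K N)
    (Q : ∀ k : Fin K, Fin (s.S k) → ℝ) (hQ : ∀ k i, 0 < Q k i)
    (β : Fin K → ℝ) (hβpos : ∀ k, 0 < β k)
    (hβ : s.Xmat Q *ᵥ β = fun k => s.σ2 * ((diagC (Q k)).trace).re)
    (P : ∀ k : Fin K, Matrix (Fin (s.S k)) (Fin (s.S k)) ℂ)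
    (hP : ∀ k, P k = (β k : ℂ) • ((s.αM k) ^ 2 * (diagC (Q k))⁻¹)) :
    ∀ k, s.xiDLk P k = s.xiULk (fun k => diagC (Q k)) k :=
  userwise_AMSE_transfer_uplink_to_downlink_general s Q hQ β hβpos hβ P hP
end
end

section
/- The sum MAMSE is non-increasing in the total transmit power: let A ∈ ℂ^{N×S}, let R ∈ ℂ^{N×N} be Hermitian positive semidefinite, let c ≥ 0 and σ² > 0. Then the function f : (0,∞) → ℝ defined by f(P) = tr((I_S + Aᴴ·(c·R + (σ²/P)·I_N)⁻¹·A)⁻¹) is monotone non-increasing: for all 0 < P₁ ≤ P₂, f(P₂) ≤ f(P₁). -/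
open Matrix ComplexOrder

/-!
Writing `B(P) = c R + (σ²/P) I`, increasing `P` decreases `B(P)` in the Loewner order. Matrix
inversion is order-reversing on positive definite matrices, so `Aᴴ B(P)⁻¹ A` and hence
`I + Aᴴ B(P)⁻¹ A` increase; inverting once more makes the MAMSE matrix decrease, and the
trace is monotone.
-/

open scoped MatrixOrder

namespace Matrix

section Square

variable {n : Type*} [Fintype n]

lemma re_trace_mono {X Y : Matrix n n ℂ} (hXY : X ≤ Y) : X.trace.re ≤ Y.trace.re := by
  have h := (le_iff.mp hXY).trace_nonneg
  rw [trace_sub, sub_nonneg] at h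
  exact (Complex.le_def.mp h).1

variable [DecidableEq n]

open scoped Matrix.Norms.L2Operator in
lemma PosDef.inv_le_inv {X Y : Matrix n n ℂ} (hX : X.PosDef) (hXY : X ≤ Y) : Y⁻¹ ≤ X⁻¹ := by
  have hY : Y.PosDef := by simpa using hX.add_posSemidef hXY
  simpa only [coe_units_inv, IsUnit.unit_spec] using
    CStarAlgebra.inv_le_inv (a := hX.isUnit.unit) (b := hY.isUnit.unit) hX.posSemidef.nonneg hXY

end Square

variable {n m : Type*} [Fintype n] [Fintype m]

lemma conjTranspose_mul_mul_mono (A : Matrix n m ℂ) {X Y : Matrix n n ℂ} (hXY : X ≤ Y) :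
    Aᴴ * X * A ≤ Aᴴ * Y * A := by
  rw [le_iff, ← Matrix.sub_mul, ← Matrix.mul_sub]
  exact hXY.conjTranspose_mul_mul_same A

variable [DecidableEq n] [DecidableEq m]

lemma PosDef.one_add_conjTranspose_mul_inv_mul (A : Matrix n m ℂ) {X : Matrix n n ℂ}
    (hX : X.PosDef) : (1 + Aᴴ * X⁻¹ * A).PosDef :=
  PosDef.one.add_posSemidef (hX.inv.posSemidef.conjTranspose_mul_mul_same A)

lemma inv_one_add_conjTranspose_mul_inv_mul_mono (A : Matrix n m ℂ) {X Y : Matrix n n ℂ}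
    (hX : X.PosDef) (hXY : X ≤ Y) :
    (1 + Aᴴ * X⁻¹ * A)⁻¹ ≤ (1 + Aᴴ * Y⁻¹ * A)⁻¹ := by
  have hY : Y.PosDef := by simpa using hX.add_posSemidef hXY
  have hD : 1 + Aᴴ * Y⁻¹ * A ≤ 1 + Aᴴ * X⁻¹ * A := by
    gcongr
    exact conjTranspose_mul_mul_mono A (hX.inv_le_inv hXY)
  exact (hY.one_add_conjTranspose_mul_inv_mul A).inv_le_inv hD

end Matrix

theorem sum_MAMSE_nonincreasing_in_power_general {N S : ℕ}
    (A : Matrix (Fin N) (Fin S) ℂ)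
    (R : Matrix (Fin N) (Fin N) ℂ) (hR : R.PosSemidef)
    (c σ2 : ℝ) (hc : 0 ≤ c) (hσ2 : 0 < σ2) :
    ∀ P₁ P₂ : ℝ, 0 < P₁ → P₁ ≤ P₂ →
      ((((1 : Matrix (Fin S) (Fin S) ℂ)
          + Aᴴ * (c • R + (σ2 / P₂) • (1 : Matrix (Fin N) (Fin N) ℂ))⁻¹ * A)⁻¹).trace).re ≤
        ((((1 : Matrix (Fin S) (Fin S) ℂ)
          + Aᴴ * (c • R + (σ2 / P₁) • (1 : Matrix (Fin N) (Fin N) ℂ))⁻¹ * A)⁻¹).trace).re := by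
  intro P₁ P₂ hP₁ hP₁₂
  have hP₂ : 0 < P₂ := hP₁.trans_le hP₁₂
  have hB₂ : (c • R + (σ2 / P₂) • (1 : Matrix (Fin N) (Fin N) ℂ)).PosDef :=
    PosDef.posSemidef_add (hR.smul hc) (PosDef.one.smul (div_pos hσ2 hP₂))
  have hB : c • R + (σ2 / P₂) • (1 : Matrix (Fin N) (Fin N) ℂ) ≤ c • R + (σ2 / P₁) • 1 := by
    gcongr
  exact re_trace_mono (inv_one_add_conjTranspose_mul_inv_mul_mono A hB₂ hB)

/-- **The sum MAMSE is non-increasing in the total transmit power.** For `A ∈ ℂ^{N×S}`,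
`R` Hermitian positive semidefinite, `c ≥ 0` and `σ² > 0`, the function
`P ↦ tr((I_S + Aᴴ (c R + (σ²/P) I_N)⁻¹ A)⁻¹)` is monotone non-increasing on `(0, ∞)`. -/
theorem sum_MAMSE_nonincreasing_in_power {N S : ℕ} (hN : 0 < N) (hS : 0 < S)
    (A : Matrix (Fin N) (Fin S) ℂ)
    (R : Matrix (Fin N) (Fin N) ℂ) (hR : R.PosSemidef)
    (c σ2 : ℝ) (hc : 0 ≤ c) (hσ2 : 0 < σ2) :
    ∀ P₁ P₂ : ℝ, 0 < P₁ → P₁ ≤ P₂ →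
      ((((1 : Matrix (Fin S) (Fin S) ℂ)
          + Aᴴ * (c • R + (σ2 / P₂) • (1 : Matrix (Fin N) (Fin N) ℂ))⁻¹ * A)⁻¹).trace).re ≤
        ((((1 : Matrix (Fin S) (Fin S) ℂ)
          + Aᴴ * (c • R + (σ2 / P₁) • (1 : Matrix (Fin N) (Fin N) ℂ))⁻¹ * A)⁻¹).trace).re :=
  sum_MAMSE_nonincreasing_in_power_general A R hR c σ2 hc hσ2
end

section
/- Eigensystem characterization of the balanced min-max power allocation: let Y ∈ ℝ^{K×K}, θ ∈ ℝ^K, let η_1,…,η_K > 0, σ² > 0 and P_max > 0, and define the (K+1)×(K+1) real matrix Ω by Ω_{kl} = Y_{kl}/η_k and Ω_{k,K+1} = σ²·θ_k/η_k for k,l ∈ {1,…,K}, Ω_{K+1,l} = (1/P_max)·Σ_{k=1}^K Y_{kl}/η_k for l ∈ {1,…,K}, and Ω_{K+1,K+1} = (σ²/P_max)·Σ_{k=1}^K θ_k/η_k. Then for every q̃ ∈ ℝ^K with all entries strictly positive and every μ ≠ 0, the following are equivalent: (i) Σ_{k=1}^K q̃_k = P_max and ((Y·q̃)_k + σ²·θ_k)/(η_k·q̃_k)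 = μ for every k; (ii) Ω·(q̃_1,…,q̃_K,1)ᵀ = μ·(q̃_1,…,q̃_K,1)ᵀ. -/
open Matrix BigOperators

/-- **Eigensystem characterization of the balanced min-max power allocation (eqs. (29)–(31)).**
With the augmented matrix `Ω` of equation (31), a strictly positive power vector `q̃` with
`Σ_k q̃_k = P_max` balances the weighted AMSEs at a common value `μ ≠ 0` iff
`(q̃, 1)ᵀ` is an eigenvector of `Ω` with eigenvalue `μ`. -/
theorem minmax_power_eigensystem {K : ℕ} (hK : 0 < K)
    (Y : Matrix (Fin K) (Fin K) ℝ) (θ : Fin K → ℝ)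
    (η : Fin K → ℝ) (hη : ∀ k, 0 < η k)
    (σ2 Pmax : ℝ) (hσ2 : 0 < σ2) (hPmax : 0 < Pmax)
    (Om : Matrix (Fin (K + 1)) (Fin (K + 1)) ℝ)
    (hOm₁ : ∀ k l : Fin K, Om k.castSucc l.castSucc = Y k l / η k)
    (hOm₂ : ∀ k : Fin K, Om k.castSucc (Fin.last K) = σ2 * θ k / η k)
    (hOm₃ : ∀ l : Fin K, Om (Fin.last K) l.castSucc = (1 / Pmax) * ∑ k, Y k l / η k)
    (hOm₄ : Om (Fin.last K) (Fin.last K) = (σ2 / Pmax) * ∑ k, θ k / η k)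
    (q : Fin K → ℝ) (hq : ∀ k, 0 < q k)
    (μ : ℝ) (hμ : μ ≠ 0) :
    ((∑ k, q k = Pmax ∧ ∀ k, ((Y *ᵥ q) k + σ2 * θ k) / (η k * q k) = μ) ↔
      Om *ᵥ (Fin.snoc q 1 : Fin (K + 1) → ℝ) = μ • (Fin.snoc q 1 : Fin (K + 1) → ℝ)) := by
  set v : Fin (K + 1) → ℝ := Fin.snoc q 1 with hv
  have hηne : ∀ k, η k ≠ 0 := fun k => (hη k).ne'
  have hqne : ∀ k, q k ≠ 0 := fun k => (hq k).ne'
  have hPne : Pmax ≠ 0 := hPmax.ne'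
  have hsumrow : ∀ k : Fin K, ∑ l, Y k l / η k * q l = (Y *ᵥ q) k / η k := by
    intro k
    rw [Matrix.mulVec, dotProduct, Finset.sum_div]
    exact Finset.sum_congr rfl fun l _ => div_mul_eq_mul_div _ _ _
  have hrow : ∀ k : Fin K, (Om *ᵥ v) k.castSucc
      = ((Y *ᵥ q) k + σ2 * θ k) / η k := by
    intro k
    rw [Matrix.mulVec, dotProduct, Fin.sum_univ_castSucc]
    simp only [hv, Fin.snoc_castSucc, Fin.snoc_last, hOm₁ k, hOm₂ k, mul_one]
    rw [hsumrow k, add_div, mul_div_assoc]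
  have hlast : (Om *ᵥ v) (Fin.last K)
      = (∑ k, ((Y *ᵥ q) k + σ2 * θ k) / η k) / Pmax := by
    rw [Matrix.mulVec, dotProduct, Fin.sum_univ_castSucc]
    simp only [hv, Fin.snoc_castSucc, Fin.snoc_last, hOm₃, hOm₄, mul_one]
    have h1 : ∑ l, (1 / Pmax * ∑ k, Y k l / η k) * q l
        = (∑ k, (Y *ᵥ q) k / η k) / Pmax := by
      have : ∑ l, (1 / Pmax * ∑ k, Y k l / η k) * q l
          = 1 / Pmax * ∑ l, ∑ k, Y k l / η k * q l := by
        rw [Finset.mul_sum]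
        exact Finset.sum_congr rfl fun l _ => by
          rw [mul_assoc, Finset.sum_mul]
      rw [this, Finset.sum_comm]
      rw [Finset.sum_congr rfl fun k _ => hsumrow k]
      rw [one_div, inv_mul_eq_div]
    rw [h1]
    have h2 : ∑ k, ((Y *ᵥ q) k + σ2 * θ k) / η k
        = ∑ k, (Y *ᵥ q) k / η k + σ2 * ∑ k, θ k / η k := by
      rw [Finset.mul_sum, ← Finset.sum_add_distrib]
      exact Finset.sum_congr rfl fun k _ => by rw [add_div, mul_div_assoc]
    rw [h2, add_div]
    congr 1
    ring
  constructor
  · rintro ⟨hsum, hbal⟩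
    have hbal' : ∀ k, ((Y *ᵥ q) k + σ2 * θ k) / η k = μ * q k := by
      intro k
      have := hbal k
      rw [div_eq_iff (mul_ne_zero (hηne k) (hqne k))] at this
      rw [div_eq_iff (hηne k), this]; ring
    funext i
    refine Fin.lastCases ?_ ?_ i
    · rw [hlast]
      have : ∑ k, ((Y *ᵥ q) k + σ2 * θ k) / η k = μ * Pmax := by
        rw [Finset.sum_congr rfl fun k _ => hbal' k, ← Finset.mul_sum, hsum]
      rw [this]
      simp [hv, mul_div_assoc, div_self hPne]
    · intro k
      rw [hrow k, hbal' k]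
      simp [hv]
  · intro heig
    have hk : ∀ k : Fin K, ((Y *ᵥ q) k + σ2 * θ k) / η k = μ * q k := by
      intro k
      have := congrFun heig k.castSucc
      rw [hrow k] at this
      simpa [hv] using this
    have hS : ∑ k, ((Y *ᵥ q) k + σ2 * θ k) / η k = μ * ∑ k, q k := by
      rw [Finset.mul_sum]; exact Finset.sum_congr rfl fun k _ => hk k
    have hlasteq := congrFun heig (Fin.last K)
    rw [hlast, hS] at hlasteq
    simp only [hv, Pi.smul_apply, Fin.snoc_last, smul_eq_mul, mul_one] at hlasteq
    constructor
    · have : μ * ∑ k, q k = μ * Pmax := by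
        rw [div_eq_iff hPne] at hlasteq
        linarith [hlasteq]
      exact mul_left_cancel₀ hμ this
    · intro k
      rw [div_eq_iff (mul_ne_zero (hηne k) (hqne k))]
      have := hk k
      rw [div_eq_iff (hηne k)] at this
      rw [this]; ring
end

section
/- AMSE floor at high SNR: let A ∈ ℂ^{N×S} and let R ∈ ℂ^{N×N} be Hermitian positive definite. Then the limit as t → 0⁺ of tr((I_S + Aᴴ·(t·I_N + R)⁻¹·A)⁻¹) equals tr((I_S + Aᴴ·R⁻¹·A)⁻¹), and this limiting value is strictly positive. Hence the sum MAMSE does not tend to zero as the noise variance σ² → 0 when the channel estimation error term R is nonzero: a strictly positive sum AMSE floor exists. -/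
open Matrix ComplexOrder Filter Topology

/-! The map `t ↦ tr((I + Aᴴ (tI + R)⁻¹ A)⁻¹)` is a composition of continuous operations and
matrix inversions, and both inversions are at invertible matrices when `t = 0` (`R` and
`I + Aᴴ R⁻¹ A` are positive definite), so the one-sided limit is just the value at `0`.
That value is the trace of the inverse of a positive definite matrix, hence positive. -/

theorem ContinuousAt.matrix_inv {X K n : Type*} [TopologicalSpace X] [Field K]
    [TopologicalSpace K] [IsTopologicalDivisionRing K] [Fintype n] [DecidableEq n]
    {f : X → Matrix n n K} {x : X} (hf : ContinuousAt f x) (hdet : IsUnit (f x).det) :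
    ContinuousAt (fun y => (f y)⁻¹) x := by
  refine ContinuousAt.comp (g := Inv.inv) ?_ hf
  refine continuousAt_matrix_inv _ ?_
  rw [Ring.inverse_eq_inv']
  exact continuousAt_inv₀ hdet.ne_zero

theorem Matrix.PosSemidef.posDef_one_add_conjTranspose_mul_inv_mul {𝕜 m n : Type*} [RCLike 𝕜]
    [Fintype m] [Fintype n] [DecidableEq m] [DecidableEq n] {R : Matrix n n 𝕜}
    (hR : R.PosSemidef) (A : Matrix n m 𝕜) : (1 + Aᴴ * R⁻¹ * A).PosDef :=
  PosDef.one.add_posSemidef (hR.inv.conjTranspose_mul_mul_same A)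

theorem AMSE_floor_high_SNR_general {N S : ℕ} (hS : 0 < S)
    (A : Matrix (Fin N) (Fin S) ℂ)
    (R : Matrix (Fin N) (Fin N) ℂ) (hR : R.PosDef) :
    Tendsto
      (fun t : ℝ =>
        ((((1 : Matrix (Fin S) (Fin S) ℂ)
          + Aᴴ * (t • (1 : Matrix (Fin N) (Fin N) ℂ) + R)⁻¹ * A)⁻¹).trace).re)
      (nhdsWithin 0 (Set.Ioi 0))
      (nhds ((((1 : Matrix (Fin S) (Fin S) ℂ) + Aᴴ * R⁻¹ * A)⁻¹).trace).re) ∧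
    0 < ((((1 : Matrix (Fin S) (Fin S) ℂ) + Aᴴ * R⁻¹ * A)⁻¹).trace).re := by
  have hK := hR.posSemidef.posDef_one_add_conjTranspose_mul_inv_mul A
  have : Nonempty (Fin S) := Fin.pos_iff_nonempty.mp hS
  refine ⟨?_, (Complex.lt_def.mp hK.inv.trace_pos).1⟩
  have hshift : ContinuousAt (fun t : ℝ => t • (1 : Matrix (Fin N) (Fin N) ℂ) + R) 0 := by
    fun_prop
  have hsandwich : Continuous fun M : Matrix (Fin N) (Fin N) ℂ => 1 + Aᴴ * M * A :=
    continuous_const.add ((continuous_const.matrix_mul continuous_id).matrix_mul continuous_const)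
  have hinner := hsandwich.continuousAt.comp
    (hshift.matrix_inv (by simpa using hR.isUnit.map detMonoidHom))
  have hF := (Complex.continuous_re.comp continuous_id.matrix_trace).continuousAt.comp
    (hinner.matrix_inv (by simpa using hK.isUnit.map detMonoidHom))
  simpa [Function.comp_def] using hF.tendsto.mono_left nhdsWithin_le_nhds

/-- **AMSE floor at high SNR.** For `A ∈ ℂ^{N×S}` and `R` Hermitian positive definite,
`tr((I + Aᴴ (t I + R)⁻¹ A)⁻¹) → tr((I + Aᴴ R⁻¹ A)⁻¹)` as `t → 0⁺`, and the limit is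
strictly positive: a strictly positive sum AMSE floor exists as the noise variance
tends to zero. -/
theorem AMSE_floor_high_SNR {N S : ℕ} (hN : 0 < N) (hS : 0 < S)
    (A : Matrix (Fin N) (Fin S) ℂ)
    (R : Matrix (Fin N) (Fin N) ℂ) (hR : R.PosDef) :
    Tendsto
      (fun t : ℝ =>
        ((((1 : Matrix (Fin S) (Fin S) ℂ)
          + Aᴴ * (t • (1 : Matrix (Fin N) (Fin N) ℂ) + R)⁻¹ * A)⁻¹).trace).re)
      (nhdsWithin 0 (Set.Ioi 0))
      (nhds ((((1 : Matrix (Fin S) (Fin S) ℂ) + Aᴴ * R⁻¹ * A)⁻¹).trace).re) ∧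
    0 < ((((1 : Matrix (Fin S) (Fin S) ℂ) + Aᴴ * R⁻¹ * A)⁻¹).trace).re :=
  AMSE_floor_high_SNR_general hS A R hR
end
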